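/- Assume N ≥ 2, α_N > 0, and K({0}) = 0. Then: (1) if K((1,∞)) = 0, then λ(p) converges to the finite limit K({1}) as p → ∞, and μ(p) → 0 as p → ∞; (2) if K((1,∞)) > 0, then there exist c > 0 and r > 1 such that λ(p) ≥ c r^p for all p > 0, so λ(p) → ∞ and μ(p) → +∞ as p → ∞, and consequently μ attains a global minimum at some finite point p₀ ∈ (0,∞). -/

import Mathlib

/-!
`K` is a finite measure carried by some `[0, R]`. If it puts no mass on `(1, ∞)`, then `a ^ p`
tends to the indicator of `{1}` on its support, so dominated convergence gives `λ(p) → K{1}` and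
hence `μ(p) → 0`. Otherwise `K (r, ∞) > 0` for some `r > 1`, and Markov's inequality gives
`λ(p) ≥ K (r, ∞) · r ^ p`, so `λ` and `μ` tend to `+∞`. As `p → 0⁺`, `a ^ p → 1` for `a ≠ 0`, so,
since `K{0} = 0`, `λ(p)` tends to the total mass `Σ n αₙ`, which exceeds `Σ αₙ = 1` because
`N ≥ 2` and `α_N > 0`; thus `μ(p) → +∞` at `0⁺` too. Being continuous on `(0, ∞)`, `μ` attains
its minimum.
-/

open MeasureTheory Filter Set
open scoped NNReal ENNReal BigOperators Topology

/-- The measure `K = Σₙ n αₙ Kₙ`, `Kₙ` the first marginal of `Aₙ` (arities `1,…,N`). -/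
noncomputable def Kmeas {N : ℕ} (α : Fin N → ℝ)
    (A : (n : Fin N) → Measure (Fin ((n : ℕ) + 1) → ℝ≥0)) : Measure ℝ≥0 :=
  ∑ n : Fin N, (((n : ℕ) + 1 : ℝ≥0∞) * ENNReal.ofReal (α n)) •
    ((A n).map (fun a => a 0))

/-- `λ(p) = ∫ a^p dK(a)`. -/
noncomputable def lamK (K : Measure ℝ≥0) (p : ℝ) : ℝ := ∫ a, (a : ℝ) ^ p ∂K

/-- The spectral function `μ(p) = (λ(p) − 1)/p`. -/
noncomputable def muK (K : Measure ℝ≥0) (p : ℝ) : ℝ := (lamK K p - 1) / p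

theorem exists_gt_measure_Ioi_ne_zero {α : Type*} [TopologicalSpace α] [LinearOrder α]
    [OrderClosedTopology α] [DenselyOrdered α] [TopologicalSpace.SeparableSpace α]
    [MeasurableSpace α] (μ : Measure α) {x : α} (h : μ (Ioi x) ≠ 0) :
    ∃ y, x < y ∧ μ (Ioi y) ≠ 0 := by
  obtain ⟨s, hs_count, hs_dense⟩ := TopologicalSpace.exists_countable_dense α
  rw [hs_dense.Ioi_eq_biUnion x, Ne,
    measure_biUnion_null_iff (hs_count.mono inter_subset_left)] at h
  obtain ⟨y, hy, hy_ne⟩ := not_forall₂.1 h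
  exact ⟨y, hy.2, hy_ne⟩

theorem tendsto_atTop_of_mul_rpow_le {f : ℝ → ℝ} {c r : ℝ} (hc : 0 < c) (hr : 1 < r)
    (hf : ∀ p > 0, c * r ^ p ≤ f p) : Tendsto f atTop atTop :=
  tendsto_atTop_mono' _ ((eventually_gt_atTop 0).mono hf)
    ((tendsto_rpow_atTop_of_base_gt_one r hr).const_mul_atTop hc)

theorem tendsto_sub_one_div_atTop_of_mul_rpow_le {f : ℝ → ℝ} {c r : ℝ} (hc : 0 < c)
    (hr : 1 < r) (hf : ∀ p > 0, c * r ^ p ≤ f p) :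
    Tendsto (fun p => (f p - 1) / p) atTop atTop := by
  have h_rpow_div : Tendsto (fun p : ℝ => r ^ p / p) atTop atTop := by
    refine (tendsto_exp_mul_div_rpow_atTop 1 _ (Real.log_pos hr)).congr fun p => ?_
    rw [Real.rpow_one, Real.rpow_def_of_pos (by linarith)]
  have h_lower := (h_rpow_div.const_mul_atTop hc).atTop_add tendsto_inv_atTop_zero.neg
  refine tendsto_atTop_mono' _ ?_ h_lower
  filter_upwards [eventually_gt_atTop 0] with p hp
  calc c * (r ^ p / p) + -p⁻¹ = (c * r ^ p - 1) / p := by field_simp; ring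
    _ ≤ (f p - 1) / p := by gcongr; exact hf p hp

theorem exists_forall_le_of_tendsto_nhdsGT_zero {f : ℝ → ℝ} (hf : ContinuousOn f (Ioi 0))
    (h_zero : Tendsto f (𝓝[>] 0) atTop) (h_top : Tendsto f atTop atTop) :
    ∃ p₀ > 0, ∀ p > 0, f p₀ ≤ f p := by
  have h_cont : Continuous (f ∘ Real.exp) :=
    hf.comp_continuous Real.continuous_exp Real.exp_pos
  have h_lim : Tendsto (f ∘ Real.exp) (cocompact ℝ) atTop := by
    rw [cocompact_eq_atBot_atTop, tendsto_sup]
    exact ⟨h_zero.comp Real.tendsto_exp_atBot_nhdsGT, h_top.comp Real.tendsto_exp_atTop⟩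
  obtain ⟨t, ht⟩ := h_cont.exists_forall_le h_lim
  exact ⟨Real.exp t, Real.exp_pos t,
    fun p hp => by simpa [Real.exp_log hp] using ht (Real.log p)⟩

theorem measurable_coe_rpow (p : ℝ) : Measurable fun a : ℝ≥0 => (a : ℝ) ^ p := by
  fun_prop

theorem norm_rpow_le_of_le {a R : ℝ≥0} (ha : a ≤ R) (hR : 1 ≤ R) {p q : ℝ} (hp : 0 ≤ p)
    (hpq : p ≤ q) : ‖(a : ℝ) ^ p‖ ≤ (R : ℝ) ^ q := by
  rw [Real.norm_of_nonneg (by positivity)]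
  exact (Real.rpow_le_rpow a.coe_nonneg ha hp).trans
    (Real.rpow_le_rpow_of_exponent_le (by exact_mod_cast hR) hpq)

section lamK

variable {K : Measure ℝ≥0} {R : ℝ≥0}

theorem ae_le_of_measure_Ioi_eq_zero (hR : K (Ioi R) = 0) : ∀ᵐ a ∂K, a ≤ R :=
  (measure_eq_zero_iff_ae_notMem.1 hR).mono fun _ h => not_lt.1 h

variable [IsFiniteMeasure K]

theorem integrable_rpow_of_measure_Ioi_eq_zero (hR : K (Ioi R) = 0) {p : ℝ} (hp : 0 ≤ p) :
    Integrable (fun a : ℝ≥0 => (a : ℝ) ^ p) K := by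
  refine (integrable_const ((R : ℝ) ^ p)).mono' (measurable_coe_rpow p).aestronglyMeasurable ?_
  filter_upwards [ae_le_of_measure_Ioi_eq_zero hR] with a ha
  rw [Real.norm_of_nonneg (by positivity)]
  exact Real.rpow_le_rpow a.coe_nonneg ha hp

theorem continuousOn_lamK (hR : K (Ioi R) = 0) (hR1 : 1 ≤ R) :
    ContinuousOn (lamK K) (Ioi 0) := by
  intro p₀ hp₀
  refine (continuousAt_of_dominated (F := fun (p : ℝ) (a : ℝ≥0) => (a : ℝ) ^ p)
    (bound := fun _ => (R : ℝ) ^ (p₀ + 1))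
    (Eventually.of_forall fun p => (measurable_coe_rpow p).aestronglyMeasurable) ?_
    (integrable_const _)
    (Eventually.of_forall fun _ => Real.continuousAt_const_rpow' hp₀.ne')).continuousWithinAt
  filter_upwards [Ioo_mem_nhds hp₀ (lt_add_one p₀)] with p hp
  filter_upwards [ae_le_of_measure_Ioi_eq_zero hR] with a ha
  exact norm_rpow_le_of_le ha hR1 hp.1.le hp.2.le

theorem tendsto_lamK_nhdsGT_zero (h0 : K {0} = 0) (hR : K (Ioi R) = 0) (hR1 : 1 ≤ R) :
    Tendsto (lamK K) (𝓝[>] 0) (𝓝 (K.real univ)) := by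
  have h := tendsto_integral_filter_of_dominated_convergence (μ := K) (l := 𝓝[>] (0 : ℝ))
    (F := fun (p : ℝ) (a : ℝ≥0) => (a : ℝ) ^ p) (f := fun _ => 1) (fun _ => (R : ℝ) ^ (1 : ℝ))
    (Eventually.of_forall fun p => (measurable_coe_rpow p).aestronglyMeasurable) ?_
    (integrable_const _) ?_
  · simp only [integral_const, smul_eq_mul, mul_one] at h
    exact h
  · filter_upwards [Ioc_mem_nhdsGT zero_lt_one] with p hp
    filter_upwards [ae_le_of_measure_Ioi_eq_zero hR] with a ha
    exact norm_rpow_le_of_le ha hR1 hp.1.le hp.2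
  · filter_upwards [measure_eq_zero_iff_ae_notMem.1 h0] with a ha
    have ha' : (a : ℝ) ≠ 0 := by exact_mod_cast ha
    simpa using (Real.continuousAt_const_rpow ha' (b := 0)).tendsto.mono_left nhdsWithin_le_nhds

theorem tendsto_lamK_atTop_of_measure_Ioi_one_eq_zero (h1 : K (Ioi 1) = 0) :
    Tendsto (lamK K) atTop (𝓝 (K.real {1})) := by
  have h := tendsto_integral_filter_of_dominated_convergence (μ := K) (l := atTop)
    (F := fun (p : ℝ) (a : ℝ≥0) => (a : ℝ) ^ p) (f := indicator {1} fun _ => 1) (fun _ => 1)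
    (Eventually.of_forall fun p => (measurable_coe_rpow p).aestronglyMeasurable) ?_
    (integrable_const _) ?_
  · rw [integral_indicator (measurableSet_singleton 1), setIntegral_const, smul_eq_mul,
      mul_one] at h
    exact h
  · filter_upwards [Ici_mem_atTop 0] with p hp
    filter_upwards [ae_le_of_measure_Ioi_eq_zero h1] with a ha
    rw [Real.norm_of_nonneg (by positivity)]
    exact Real.rpow_le_one a.coe_nonneg (by exact_mod_cast ha) hp
  · filter_upwards [ae_le_of_measure_Ioi_eq_zero h1] with a ha
    rcases ha.eq_or_lt with rfl | ha_lt
    · simp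
    · have ha_lt' : (a : ℝ) < 1 := by exact_mod_cast ha_lt
      simpa [ha_lt.ne] using
        tendsto_rpow_atTop_of_base_lt_one _ (by linarith [a.coe_nonneg]) ha_lt'

theorem mul_rpow_le_lamK (hR : K (Ioi R) = 0) (r : ℝ≥0) {p : ℝ} (hp : 0 ≤ p) :
    K.real (Ioi r) * (r : ℝ) ^ p ≤ lamK K p := by
  have h_markov := mul_meas_ge_le_integral_of_nonneg
    (Eventually.of_forall fun a => by positivity) (integrable_rpow_of_measure_Ioi_eq_zero hR hp)
    ((r : ℝ) ^ p)
  refine le_trans ?_ h_markov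
  rw [mul_comm]
  refine mul_le_mul_of_nonneg_left (measureReal_mono (fun a ha => ?_)) (by positivity)
  exact Real.rpow_le_rpow r.coe_nonneg (le_of_lt ha) hp

theorem exists_mul_rpow_le_lamK (hR : K (Ioi R) = 0) (h1 : K (Ioi 1) ≠ 0) :
    ∃ c > (0 : ℝ), ∃ r > (1 : ℝ), ∀ p > (0 : ℝ), c * r ^ p ≤ lamK K p := by
  obtain ⟨r, hr, hr_ne⟩ := exists_gt_measure_Ioi_ne_zero K h1
  exact ⟨K.real (Ioi r), ENNReal.toReal_pos hr_ne (measure_ne_top K _), r,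
    by exact_mod_cast hr, fun p hp => mul_rpow_le_lamK hR r hp.le⟩

theorem continuousOn_muK (hR : K (Ioi R) = 0) (hR1 : 1 ≤ R) : ContinuousOn (muK K) (Ioi 0) :=
  ((continuousOn_lamK hR hR1).sub continuousOn_const).div continuousOn_id fun _ hp => hp.ne'

theorem tendsto_muK_nhdsGT_zero (h0 : K {0} = 0) (hR : K (Ioi R) = 0) (hR1 : 1 ≤ R)
    (hmass : 1 < K.real univ) : Tendsto (muK K) (𝓝[>] 0) atTop :=
  ((tendsto_lamK_nhdsGT_zero h0 hR hR1).sub_const 1).pos_mul_atTop (sub_pos.2 hmass)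
    tendsto_inv_nhdsGT_zero |>.congr fun _ => (div_eq_mul_inv _ _).symm

theorem tendsto_lamK_muK_of_measure_Ioi_one_eq_zero (h1 : K (Ioi 1) = 0) :
    Tendsto (lamK K) atTop (𝓝 (K.real {1})) ∧ Tendsto (muK K) atTop (𝓝 0) := by
  have h_lam := tendsto_lamK_atTop_of_measure_Ioi_one_eq_zero h1
  exact ⟨h_lam, (h_lam.sub_const 1).div_atTop tendsto_id⟩

theorem lamK_muK_of_measure_Ioi_one_ne_zero (h0 : K {0} = 0) (hR : K (Ioi R) = 0)
    (hR1 : 1 ≤ R) (hmass : 1 < K.real univ) (h1 : K (Ioi 1) ≠ 0) :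
    (∃ c > (0 : ℝ), ∃ r > (1 : ℝ), ∀ p > (0 : ℝ), c * r ^ p ≤ lamK K p) ∧
      Tendsto (lamK K) atTop atTop ∧ Tendsto (muK K) atTop atTop ∧
      ∃ p₀ > (0 : ℝ), ∀ p > (0 : ℝ), muK K p₀ ≤ muK K p := by
  obtain ⟨c, hc, r, hr, h_growth⟩ := exists_mul_rpow_le_lamK hR h1
  have h_mu_top : Tendsto (muK K) atTop atTop :=
    tendsto_sub_one_div_atTop_of_mul_rpow_le hc hr h_growth
  exact ⟨⟨c, hc, r, hr, h_growth⟩, tendsto_atTop_of_mul_rpow_le hc hr h_growth, h_mu_top,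
    exists_forall_le_of_tendsto_nhdsGT_zero (continuousOn_muK hR hR1)
      (tendsto_muK_nhdsGT_zero h0 hR hR1 hmass) h_mu_top⟩

end lamK

section Kmeas

variable {N : ℕ} {α : Fin N → ℝ} {A : (n : Fin N) → Measure (Fin ((n : ℕ) + 1) → ℝ≥0)}

theorem Kmeas_apply {s : Set ℝ≥0} (hs : MeasurableSet s) :
    Kmeas α A s =
      ∑ n : Fin N,
        ((n : ℕ) + 1 : ℝ≥0∞) * ENNReal.ofReal (α n) * A n ((fun a => a 0) ⁻¹' s) := by
  simp only [Kmeas, Measure.finsetSum_apply, Measure.smul_apply, smul_eq_mul]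
  exact Finset.sum_congr rfl fun n _ => by rw [Measure.map_apply (measurable_pi_apply 0) hs]

theorem Kmeas_univ (hprob : ∀ n, IsProbabilityMeasure (A n)) :
    Kmeas α A univ = ∑ n : Fin N, ((n : ℕ) + 1 : ℝ≥0∞) * ENNReal.ofReal (α n) := by
  simp [Kmeas_apply MeasurableSet.univ]

theorem isFiniteMeasure_Kmeas (hprob : ∀ n, IsProbabilityMeasure (A n)) :
    IsFiniteMeasure (Kmeas α A) :=
  ⟨by rw [Kmeas_univ hprob]; exact ENNReal.sum_lt_top.2 fun n _ => by finiteness⟩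

theorem Kmeas_real_univ (hα : ∀ n, 0 ≤ α n) (hprob : ∀ n, IsProbabilityMeasure (A n)) :
    (Kmeas α A).real univ = ∑ n : Fin N, ((n : ℕ) + 1 : ℝ) * α n := by
  rw [measureReal_def, Kmeas_univ hprob, ENNReal.toReal_sum fun n _ => by finiteness]
  simp [ENNReal.toReal_ofReal (hα _), ENNReal.toReal_add]

-- The index `n : Fin N` stands for arity `n + 1`, so the total mass is `Σ (n + 1) αₙ`.
theorem one_lt_Kmeas_real_univ (hα : ∀ n, 0 ≤ α n) (hsum : ∑ n, α n = 1) {i : Fin N}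
    (hi : 1 ≤ (i : ℕ)) (hαi : 0 < α i) (hprob : ∀ n, IsProbabilityMeasure (A n)) :
    1 < (Kmeas α A).real univ := by
  have hi' : (1 : ℝ) ≤ (i : ℕ) := by exact_mod_cast hi
  rw [Kmeas_real_univ hα hprob]
  calc (1 : ℝ) < ((i : ℕ) : ℝ) * α i + ∑ n, α n := by rw [hsum]; nlinarith
    _ ≤ ∑ n : Fin N, ((n : ℕ) : ℝ) * α n + ∑ n, α n := by
        gcongr
        exact Finset.single_le_sum (f := fun n : Fin N => ((n : ℕ) : ℝ) * α n)
          (fun n _ => mul_nonneg n.val.cast_nonneg (hα n)) (Finset.mem_univ i)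
    _ = ∑ n : Fin N, ((n : ℕ) + 1 : ℝ) * α n := by
        rw [← Finset.sum_add_distrib]; simp only [add_mul, one_mul]

theorem exists_one_le_Kmeas_Ioi_eq_zero
    (hcomp : ∀ n, ∃ R : ℝ≥0, (A n) {a | ∃ k, R < a k} = 0) :
    ∃ R : ℝ≥0, 1 ≤ R ∧ Kmeas α A (Ioi R) = 0 := by
  choose R hR using hcomp
  refine ⟨1 ⊔ Finset.univ.sup R, le_sup_left, ?_⟩
  rw [Kmeas_apply measurableSet_Ioi]
  refine Finset.sum_eq_zero fun n _ => ?_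
  have h_sub : (fun a : Fin ((n : ℕ) + 1) → ℝ≥0 => a 0) ⁻¹' Ioi (1 ⊔ Finset.univ.sup R) ⊆
      {a | ∃ k, R n < a k} :=
    fun a ha => ⟨0, ((Finset.le_sup (Finset.mem_univ n)).trans le_sup_right).trans_lt ha⟩
  rw [measure_mono_null h_sub (hR n), mul_zero]

end Kmeas

theorem stmt_9 (N : ℕ) (hN : 2 ≤ N) (α : Fin N → ℝ) (hα : ∀ n, 0 ≤ α n)
    (hsum : ∑ n, α n = 1)
    (hlast : 0 < α ⟨N - 1, by omega⟩)
    (A : (n : Fin N) → Measure (Fin ((n : ℕ) + 1) → ℝ≥0))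
    (hprob : ∀ n, IsProbabilityMeasure (A n))
    (hcomp : ∀ n, ∃ R : ℝ≥0, (A n) {a | ∃ k, R < a k} = 0)
    (hzero : Kmeas α A {0} = 0) :
    -- (1) if K((1,∞)) = 0 then λ(p) → K({1}) and μ(p) → 0 as p → ∞
    ((Kmeas α A) (Set.Ioi 1) = 0 →
      Tendsto (lamK (Kmeas α A)) atTop (nhds (((Kmeas α A) {1}).toReal)) ∧
      Tendsto (muK (Kmeas α A)) atTop (nhds 0)) ∧
    -- (2) if K((1,∞)) > 0 then λ grows exponentially, λ(p) → ∞, μ(p) → +∞,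
    -- and μ attains a global minimum at a finite p₀ > 0
    ((Kmeas α A) (Set.Ioi 1) ≠ 0 →
      (∃ c > (0 : ℝ), ∃ r > (1 : ℝ), ∀ p > (0 : ℝ), c * r ^ p ≤ lamK (Kmeas α A) p) ∧
      Tendsto (lamK (Kmeas α A)) atTop atTop ∧
      Tendsto (muK (Kmeas α A)) atTop atTop ∧
      ∃ p₀ > (0 : ℝ), ∀ p > (0 : ℝ), muK (Kmeas α A) p₀ ≤ muK (Kmeas α A) p) := by
  have := isFiniteMeasure_Kmeas (α := α) hprob
  obtain ⟨R, hR1, hR⟩ := exists_one_le_Kmeas_Ioi_eq_zero hcomp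
  exact ⟨tendsto_lamK_muK_of_measure_Ioi_one_eq_zero,
    lamK_muK_of_measure_Ioi_one_ne_zero hzero hR hR1
      (one_lt_Kmeas_real_univ hα hsum (Nat.le_sub_of_add_le hN) hlast hprob)⟩
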